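/- For any matrix D ∈ SL(d+1,ℝ) \ SO(d+1), there exist n ≥ 1, rotations R₀, R₁, …, R_n ∈ SO(d+1), and signs α₁,…,α_n ∈ {−1,+1} such that R₀ D^{α₁} R₁ D^{α₂} ⋯ R_{n−1} D^{α_n} R_n = diag(r₁,…,r_{d+1}) is a diagonal matrix with 0 < r_{d+1} < min₁≤i≤d rᵢ and max_{1<i≤d} rᵢ^d < r₁⋯r_d. -/

import Mathlib

noncomputable section

abbrev SLn (n : ℕ) := Matrix.SpecialLinearGroup (Fin n) ℝ

/-- An element of `SL(n,ℝ)` lies in `SO(n)` iff its matrix is orthogonal. -/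
def IsSO {n : ℕ} (A : SLn n) : Prop :=
  Matrix.transpose (A : Matrix (Fin n) (Fin n) ℝ) * (A : Matrix (Fin n) (Fin n) ℝ) = 1

/-- `soWord D R a n = R₀ D^{a₁} R₁ D^{a₂} ⋯ R_{n-1} D^{a_n} R_n`. -/
def soWord {n : ℕ} (D : SLn n) (R : ℕ → SLn n) (a : ℕ → ℤ) : ℕ → SLn n
  | 0 => R 0
  | k + 1 => soWord D R a k * D ^ (a (k + 1)) * R (k + 1)

/-!
Write `D = A Σ B` with `A, B ∈ SO(d+1)` and `Σ = diag σ`, `σ` positive and increasing: a singular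
value decomposition whose orthogonal factors are made special by flipping one column and whose
singular values are sorted by conjugating with a signed permutation matrix. As `D ∉ SO(d+1)`,
`σ₀ < σ_d`. If `P ∈ SO(d+1)` is a signed permutation matrix realising the transposition of the first
and last coordinates, then
`(P A⁻¹) D (B⁻¹ P⁻¹ B) D⁻¹ A = P Σ P⁻¹ Σ⁻¹ = diag (σ_d/σ₀, 1, …, 1, σ₀/σ_d)`,
which has the required shape.
-/

open Matrix

local notation "Mat" n:max => Matrix (Fin n) (Fin n) ℝ

namespace IsSO

variable {n : ℕ} {A B : SLn n}

lemma mul (hA : IsSO A) (hB : IsSO B) : IsSO (A * B) := by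
  unfold IsSO at *
  rw [Matrix.SpecialLinearGroup.coe_mul, transpose_mul, mul_assoc, ← mul_assoc _ _ (B : Mat n),
    hA, one_mul, hB]

lemma coe_inv (hA : IsSO A) : ((A⁻¹ : SLn n) : Mat n) = (A : Mat n)ᵀ := by
  unfold IsSO at hA
  calc ((A⁻¹ : SLn n) : Mat n) = (A : Mat n)ᵀ * ((A * A⁻¹ : SLn n) : Mat n) := by
        rw [Matrix.SpecialLinearGroup.coe_mul, ← mul_assoc, hA, one_mul]
    _ = (A : Mat n)ᵀ := by simp

lemma inv (hA : IsSO A) : IsSO A⁻¹ := by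
  have h := hA.coe_inv
  unfold IsSO at *
  rw [h, transpose_transpose, mul_eq_one_comm.mp hA]

end IsSO

section SignCorrection

variable {n : ℕ}

lemma diagonal_mulSingle_mul_self {s : ℝ} (hs : s * s = 1) :
    diagonal (Pi.mulSingle (0 : Fin (n + 1)) s) * diagonal (Pi.mulSingle 0 s) = 1 := by
  rw [diagonal_mul_diagonal', ← Pi.mul_def, ← Pi.mulSingle_mul, hs, Pi.mulSingle_one, diagonal_one']

lemma det_mul_self_of_transpose_mul_self {U : Mat n} (hU : Uᵀ * U = 1) : U.det * U.det = 1 := by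
  simpa using congrArg det hU

def orthogonalToSO (U : Mat (n + 1)) (hU : Uᵀ * U = 1) : SLn (n + 1) :=
  ⟨U * diagonal (Pi.mulSingle 0 U.det), by
    rw [det_mul, det_diagonal, Fintype.prod_pi_mulSingle', det_mul_self_of_transpose_mul_self hU]⟩

variable {U : Mat (n + 1)}

lemma coe_orthogonalToSO (hU : Uᵀ * U = 1) :
    (orthogonalToSO U hU : Mat (n + 1)) = U * diagonal (Pi.mulSingle 0 U.det) :=
  rfl

lemma isSO_orthogonalToSO (hU : Uᵀ * U = 1) : IsSO (orthogonalToSO U hU) := by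
  have hJ := diagonal_mulSingle_mul_self (n := n) (det_mul_self_of_transpose_mul_self hU)
  rw [IsSO, coe_orthogonalToSO, transpose_mul, diagonal_transpose, mul_assoc, ← mul_assoc Uᵀ, hU,
    one_mul, hJ]

lemma coe_orthogonalToSO_mul_diagonal (hU : Uᵀ * U = 1) (w : Fin (n + 1) → ℝ) :
    (orthogonalToSO U hU : Mat (n + 1)) * diagonal w =
      U * diagonal w * diagonal (Pi.mulSingle 0 U.det) := by
  rw [coe_orthogonalToSO, mul_assoc, (commute_diagonal _ _).eq, ← mul_assoc]

end SignCorrection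

lemma exists_isSO_mul_diagonal_eq_diagonal_comp {n : ℕ} (e : Equiv.Perm (Fin (n + 1))) :
    ∃ P : SLn (n + 1), IsSO P ∧
      ∀ w : Fin (n + 1) → ℝ, (P : Mat (n + 1)) * diagonal w = diagonal (w ∘ e) * P := by
  have hU : (e.permMatrix ℝ)ᵀ * e.permMatrix ℝ = 1 := by
    rw [transpose_permMatrix, ← permMatrix_mul, mul_inv_cancel, permMatrix_one]
  refine ⟨orthogonalToSO _ hU, isSO_orthogonalToSO hU, fun w => ?_⟩
  have he : e.permMatrix ℝ * diagonal w = diagonal (w ∘ e) * e.permMatrix ℝ := by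
    ext i j
    by_cases h : e i = j <;> simp [Equiv.Perm.permMatrix, PEquiv.toMatrix_apply, h]
  rw [coe_orthogonalToSO_mul_diagonal, he, mul_assoc]
  rfl

section Diagonal

variable {n : ℕ}

lemma prod_eq_one_of_coe_eq_diagonal {S : SLn n} {σ : Fin n → ℝ} (hS : (S : Mat n) = diagonal σ) :
    ∏ i, σ i = 1 := by
  rw [← det_diagonal, ← hS, Matrix.SpecialLinearGroup.det_coe]

lemma ne_zero_of_coe_eq_diagonal {S : SLn n} {σ : Fin n → ℝ} (hS : (S : Mat n) = diagonal σ)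
    (i : Fin n) : σ i ≠ 0 :=
  Finset.prod_ne_zero_iff.mp (prod_eq_one_of_coe_eq_diagonal hS ▸ one_ne_zero) i (Finset.mem_univ i)

lemma coe_inv_of_coe_eq_diagonal {S : SLn n} {σ : Fin n → ℝ} (hS : (S : Mat n) = diagonal σ) :
    ((S⁻¹ : SLn n) : Mat n) = diagonal σ⁻¹ := by
  have hσ : σ * σ⁻¹ = 1 := funext fun i => mul_inv_cancel₀ (ne_zero_of_coe_eq_diagonal hS i)
  calc ((S⁻¹ : SLn n) : Mat n) = ((S⁻¹ * S : SLn n) : Mat n) * diagonal σ⁻¹ := by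
        rw [Matrix.SpecialLinearGroup.coe_mul, mul_assoc, hS, diagonal_mul_diagonal', ← Pi.mul_def,
          hσ, diagonal_one', mul_one]
    _ = diagonal σ⁻¹ := by simp

lemma coe_conj_of_mul_diagonal {P S : SLn n} {σ τ : Fin n → ℝ} (hS : (S : Mat n) = diagonal σ)
    (hP : (P : Mat n) * diagonal σ = diagonal τ * P) :
    ((P * S * P⁻¹ : SLn n) : Mat n) = diagonal τ := by
  rw [Matrix.SpecialLinearGroup.coe_mul, Matrix.SpecialLinearGroup.coe_mul, hS, hP, mul_assoc,
    ← Matrix.SpecialLinearGroup.coe_mul, mul_inv_cancel, Matrix.SpecialLinearGroup.coe_one, mul_one]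

end Diagonal

lemma Matrix.IsHermitian.exists_isSO_transpose_mul_mul_eq_diagonal {n : ℕ} {M : Mat (n + 1)}
    (hM : M.IsHermitian) :
    ∃ Q : SLn (n + 1), IsSO Q ∧ (Q : Mat (n + 1))ᵀ * M * Q = diagonal hM.eigenvalues := by
  set U : Mat (n + 1) := (hM.eigenvectorUnitary : Mat (n + 1))
  have hstar : star U = Uᵀ := by rw [star_eq_conjTranspose, conjTranspose_eq_transpose_of_trivial]
  have hU : Uᵀ * U = 1 := hstar ▸ Unitary.coe_star_mul_self hM.eigenvectorUnitary
  have hUM : Uᵀ * M * U = diagonal hM.eigenvalues := by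
    rw [← hstar]
    simpa [Unitary.conjStarAlgAut_star_apply] using
      hM.conjStarAlgAut_star_eigenvectorUnitary
  refine ⟨orthogonalToSO U hU, isSO_orthogonalToSO hU, ?_⟩
  rw [coe_orthogonalToSO, transpose_mul, diagonal_transpose]
  set J := diagonal (Pi.mulSingle (0 : Fin (n + 1)) U.det)
  have hJ : J * J = 1 := diagonal_mulSingle_mul_self (det_mul_self_of_transpose_mul_self hU)
  calc J * Uᵀ * M * (U * J) = J * (Uᵀ * M * U) * J := by simp only [mul_assoc]
    _ = diagonal hM.eigenvalues * (J * J) := by rw [hUM, (commute_diagonal _ _).eq, mul_assoc]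
    _ = diagonal hM.eigenvalues := by rw [hJ, mul_one]

lemma isSO_mul_mul_inv_of_transpose_mul_self {n : ℕ} {D Q S : SLn n} {σ : Fin n → ℝ}
    (hS : (S : Mat n) = diagonal σ)
    (hQ : (Q : Mat n)ᵀ * ((D : Mat n)ᵀ * D) * Q = diagonal (σ * σ)) :
    IsSO (D * Q * S⁻¹) := by
  have hσ : σ⁻¹ * (σ * σ) * σ⁻¹ = 1 := funext fun i => by
    simp only [Pi.mul_apply, Pi.inv_apply, Pi.one_apply]
    field_simp [ne_zero_of_coe_eq_diagonal hS i]
  unfold IsSO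
  rw [Matrix.SpecialLinearGroup.coe_mul, Matrix.SpecialLinearGroup.coe_mul,
    coe_inv_of_coe_eq_diagonal hS]
  calc ((D : Mat n) * (Q : Mat n) * diagonal σ⁻¹)ᵀ * ((D : Mat n) * (Q : Mat n) * diagonal σ⁻¹)
      = diagonal σ⁻¹ * ((Q : Mat n)ᵀ * ((D : Mat n)ᵀ * D) * (Q : Mat n)) * diagonal σ⁻¹ := by
        simp only [transpose_mul, diagonal_transpose, mul_assoc]
    _ = 1 := by
        rw [hQ, diagonal_mul_diagonal', diagonal_mul_diagonal', ← Pi.mul_def, ← Pi.mul_def, hσ,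
          diagonal_one']

lemma exists_isSO_mul_diagonal_mul_isSO {n : ℕ} (D : SLn (n + 1)) :
    ∃ A S B : SLn (n + 1), IsSO A ∧ IsSO B ∧ D = A * S * B ∧
      ∃ σ : Fin (n + 1) → ℝ, (∀ i, 0 < σ i) ∧ (S : Mat (n + 1)) = diagonal σ := by
  have hM : ((D : Mat (n + 1))ᵀ * D).IsHermitian := by
    simpa using isHermitian_conjTranspose_mul_self (D : Mat (n + 1))
  obtain ⟨Q, hQ, hQM⟩ := hM.exists_isSO_transpose_mul_mul_eq_diagonal
  set μ := hM.eigenvalues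
  have hμ_nonneg : ∀ i, 0 ≤ μ i := by
    simpa using (posSemidef_conjTranspose_mul_self (D : Mat (n + 1))).eigenvalues_nonneg
  have hμ_prod : ∏ i, μ i = 1 := by
    rw [← det_diagonal, ← hQM]
    simp
  have hμ_pos : ∀ i, 0 < μ i := fun i => (hμ_nonneg i).lt_of_ne'
    (Finset.prod_ne_zero_iff.mp (hμ_prod ▸ one_ne_zero) i (Finset.mem_univ i))
  set σ := fun i => √(μ i)
  have hσ_prod : ∏ i, σ i = 1 := by
    rw [← Real.sqrt_prod _ fun i _ => hμ_nonneg i, hμ_prod, Real.sqrt_one]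
  have hσμ : σ * σ = μ := funext fun i => Real.mul_self_sqrt (hμ_nonneg i)
  set S : SLn (n + 1) := ⟨diagonal σ, by rw [det_diagonal, hσ_prod]⟩
  exact ⟨D * Q * S⁻¹, S, Q⁻¹, isSO_mul_mul_inv_of_transpose_mul_self rfl (hσμ ▸ hQM), hQ.inv,
    by group, σ, fun i => Real.sqrt_pos.2 (hμ_pos i), rfl⟩

lemma exists_isSO_mul_diagonal_mul_isSO_monotone {n : ℕ} (D : SLn (n + 1)) :
    ∃ A S B : SLn (n + 1), IsSO A ∧ IsSO B ∧ D = A * S * B ∧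
      ∃ σ : Fin (n + 1) → ℝ, Monotone σ ∧ (∀ i, 0 < σ i) ∧ (S : Mat (n + 1)) = diagonal σ := by
  obtain ⟨A, S, B, hA, hB, rfl, σ, hσ, hS⟩ := exists_isSO_mul_diagonal_mul_isSO D
  obtain ⟨P, hP, hPσ⟩ := exists_isSO_mul_diagonal_eq_diagonal_comp (Tuple.sort σ)
  exact ⟨A * P⁻¹, P * S * P⁻¹, P * B, hA.mul hP.inv, hP.mul hB, by group, σ ∘ Tuple.sort σ,
    Tuple.monotone_sort σ, fun i => hσ _, coe_conj_of_mul_diagonal hS (hPσ σ)⟩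

lemma zero_lt_last_of_not_isSO {d : ℕ} {A S B : SLn (d + 1)} (hA : IsSO A) (hB : IsSO B)
    {σ : Fin (d + 1) → ℝ} (hσ : Monotone σ) (hσ_pos : ∀ i, 0 < σ i)
    (hS : (S : Mat (d + 1)) = diagonal σ) (hD : ¬ IsSO (A * S * B)) :
    σ 0 < σ (Fin.last d) := by
  refine (hσ (Fin.zero_le _)).lt_of_ne fun heq => hD ?_
  have hconst : ∀ i, σ i = σ 0 := fun i =>
    le_antisymm (heq ▸ hσ (Fin.le_last i)) (hσ (Fin.zero_le i))
  have hσ₀ : σ 0 = 1 := by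
    have hprod := prod_eq_one_of_coe_eq_diagonal hS
    simp only [hconst, Finset.prod_const, Finset.card_univ, Fintype.card_fin] at hprod
    exact (pow_eq_one_iff_of_nonneg (hσ_pos 0).le d.succ_ne_zero).mp hprod
  have hS1 : S = 1 := Subtype.ext <| by
    rw [hS, Matrix.SpecialLinearGroup.coe_one, ← diagonal_one]
    exact congrArg diagonal (funext fun i => (hconst i).trans hσ₀)
  rw [hS1, mul_one]
  exact hA.mul hB

lemma soWord_two {n : ℕ} (D : SLn n) (R : ℕ → SLn n) (a : ℕ → ℤ) :
    soWord D R a 2 = R 0 * D ^ a 1 * R 1 * D ^ a 2 * R 2 :=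
  rfl

lemma exists_soWord_two_eq_diagonal {n : ℕ} {A S B : SLn (n + 1)} (hA : IsSO A) (hB : IsSO B)
    {σ : Fin (n + 1) → ℝ} (hS : (S : Mat (n + 1)) = diagonal σ) (τ : Equiv.Perm (Fin (n + 1))) :
    ∃ (R : ℕ → SLn (n + 1)) (a : ℕ → ℤ), (∀ i, IsSO (R i)) ∧ (∀ i, a i = 1 ∨ a i = -1) ∧
      (soWord (A * S * B) R a 2 : Mat (n + 1)) = diagonal fun i => σ (τ i) / σ i := by
  obtain ⟨P, hP, hPσ⟩ := exists_isSO_mul_diagonal_eq_diagonal_comp τ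
  let R : ℕ → SLn (n + 1) := fun i => if i = 0 then P * A⁻¹ else if i = 1 then B⁻¹ * P⁻¹ * B else A
  let a : ℕ → ℤ := fun i => (-1) ^ (i + 1)
  have hword : soWord (A * S * B) R a 2 = P * S * P⁻¹ * S⁻¹ := by
    norm_num [soWord_two, R, a]
    group
  refine ⟨R, a, fun i => ?_, fun i => neg_one_pow_eq_or ℤ (i + 1), ?_⟩
  · dsimp only [R]
    split_ifs
    exacts [hP.mul hA.inv, (hB.inv.mul hP.inv).mul hB, hA]
  · rw [hword, Matrix.SpecialLinearGroup.coe_mul, coe_conj_of_mul_diagonal hS (hPσ σ),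
      coe_inv_of_coe_eq_diagonal hS, diagonal_mul_diagonal']
    rfl

section SwapRatio

variable {d : ℕ} {s : Fin (d + 1) → ℝ}

def swapRatio (s : Fin (d + 1) → ℝ) (i : Fin (d + 1)) : ℝ :=
  s (Equiv.swap 0 (Fin.last d) i) / s i

lemma swapRatio_zero : swapRatio s 0 = s (Fin.last d) / s 0 := by
  rw [swapRatio, Equiv.swap_apply_left]

lemma swapRatio_last : swapRatio s (Fin.last d) = s 0 / s (Fin.last d) := by
  rw [swapRatio, Equiv.swap_apply_right]

lemma swapRatio_of_ne (hs : ∀ i, 0 < s i) {i : Fin (d + 1)} (h₀ : i ≠ 0) (hl : i ≠ Fin.last d) :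
    swapRatio s i = 1 := by
  rw [swapRatio, Equiv.swap_apply_of_ne_of_ne h₀ hl, div_self (hs i).ne']

lemma swapRatio_last_pos (hs : ∀ i, 0 < s i) : 0 < swapRatio s (Fin.last d) := by
  rw [swapRatio_last]
  exact div_pos (hs 0) (hs _)

lemma swapRatio_last_lt_one (hs : ∀ i, 0 < s i) (hlt : s 0 < s (Fin.last d)) :
    swapRatio s (Fin.last d) < 1 := by
  rw [swapRatio_last, div_lt_one (hs _)]
  exact hlt

lemma one_lt_swapRatio_zero (hs : ∀ i, 0 < s i) (hlt : s 0 < s (Fin.last d)) :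
    1 < swapRatio s 0 := by
  rw [swapRatio_zero, one_lt_div (hs _)]
  exact hlt

lemma swapRatio_last_lt (hs : ∀ i, 0 < s i) (hlt : s 0 < s (Fin.last d)) {i : Fin (d + 1)}
    (hi : i ≠ Fin.last d) : swapRatio s (Fin.last d) < swapRatio s i := by
  by_cases h₀ : i = 0
  · subst h₀
    exact (swapRatio_last_lt_one hs hlt).trans (one_lt_swapRatio_zero hs hlt)
  · rw [swapRatio_of_ne hs h₀ hi]
    exact swapRatio_last_lt_one hs hlt

lemma swapRatio_pow_lt_prod_erase_last (hs : ∀ i, 0 < s i) (hlt : s 0 < s (Fin.last d))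
    {i : Fin (d + 1)} (h₀ : i ≠ 0) (hl : i ≠ Fin.last d) :
    swapRatio s i ^ d < ∏ j ∈ Finset.univ.erase (Fin.last d), swapRatio s j := by
  have h0l : (0 : Fin (d + 1)) ≠ Fin.last d := fun h => hlt.ne (congrArg s h)
  rw [swapRatio_of_ne hs h₀ hl, one_pow, Finset.prod_eq_single_of_mem 0
    (Finset.mem_erase.mpr ⟨h0l, Finset.mem_univ 0⟩)
    fun j hj hj₀ => swapRatio_of_ne hs hj₀ (Finset.ne_of_mem_erase hj)]
  exact one_lt_swapRatio_zero hs hlt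

end SwapRatio

/-- For any `D ∈ SL(d+1,ℝ) \ SO(d+1)` there exist `n ≥ 1`, rotations
`R₀,…,R_n ∈ SO(d+1)` and signs `α₁,…,α_n ∈ {−1,+1}` such that
`R₀ D^{α₁} R₁ ⋯ R_{n−1} D^{α_n} R_n = diag(r₁,…,r_{d+1})` with
`0 < r_{d+1} < min_{1≤i≤d} rᵢ` and `max_{1<i≤d} rᵢ^d < r₁⋯r_d`. -/
theorem stmt16 (d : ℕ) (D : SLn (d + 1)) (hD : ¬ IsSO D) :
    ∃ (n : ℕ), 1 ≤ n ∧ ∃ (R : ℕ → SLn (d + 1)) (a : ℕ → ℤ),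
      (∀ i, i ≤ n → IsSO (R i)) ∧
      (∀ i, 1 ≤ i → i ≤ n → a i = 1 ∨ a i = -1) ∧
      ∃ r : Fin (d + 1) → ℝ,
        ((soWord D R a n : SLn (d + 1)) : Matrix (Fin (d + 1)) (Fin (d + 1)) ℝ) =
          Matrix.diagonal r ∧
        0 < r (Fin.last d) ∧
        (∀ i : Fin (d + 1), i ≠ Fin.last d → r (Fin.last d) < r i) ∧
        (∀ i : Fin (d + 1), i ≠ 0 → i ≠ Fin.last d →
          (r i) ^ d < ∏ j ∈ Finset.univ.erase (Fin.last d), r j) := by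
  obtain ⟨A, S, B, hA, hB, rfl, σ, hσ, hσ_pos, hS⟩ :=
    exists_isSO_mul_diagonal_mul_isSO_monotone D
  have hlt := zero_lt_last_of_not_isSO hA hB hσ hσ_pos hS hD
  obtain ⟨R, a, hR, ha, hword⟩ := exists_soWord_two_eq_diagonal hA hB hS (Equiv.swap 0 (Fin.last d))
  exact ⟨2, one_le_two, R, a, fun i _ => hR i, fun i _ _ => ha i, swapRatio σ, hword,
    swapRatio_last_pos hσ_pos, fun i => swapRatio_last_lt hσ_pos hlt,
    fun i => swapRatio_pow_lt_prod_erase_last hσ_pos hlt⟩
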